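/- Let ω be a modulus of continuity with lim_{t→∞} ω(t)=∞, let E ⊆ ℝⁿ be an arbitrary nonempty set, and let V be a Banach space. A function f ∈ C^{0,ω}(E,V) admits an extension F ∈ VC_large^{0,ω}(ℝⁿ,V) with F|_E = f if and only if f ∈ VC_large^{0,ω}(E,V). -/

import Mathlib

open Filter Set Topology

noncomputable section

/-- `ℝⁿ` with the Euclidean norm. -/
abbrev Rn (n : ℕ) : Type := EuclideanSpace ℝ (Fin n)

/-- `ω : (0,∞) → (0,∞)` is a modulus of continuity with constant `Cω`:
nondecreasing, positive, `ω(t) → 0` as `t → 0⁺`, and `s/ω(s) ≤ Cω · t/ω(t)` for `0 < s ≤ t`. -/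
def IsModulus (ω : ℝ → ℝ) (Cω : ℝ) : Prop :=
  (∀ t : ℝ, 0 < t → 0 < ω t) ∧
  (∀ s t : ℝ, 0 < s → s ≤ t → ω s ≤ ω t) ∧
  Filter.Tendsto ω (nhdsWithin 0 (Set.Ioi 0)) (nhds 0) ∧
  (∀ s t : ℝ, 0 < s → s ≤ t → s / ω s ≤ Cω * (t / ω t))

/-- Plug the vector `v` into `j` of the slots of a `(k+j)`-linear map. -/
def plugIn {n : ℕ} {V : Type*} [NormedAddCommGroup V] [NormedSpace ℝ V] (v : Rn n) :
    ∀ (j : ℕ) {k : ℕ},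
      ContinuousMultilinearMap ℝ (fun _ : Fin (k + j) => Rn n) V →
      ContinuousMultilinearMap ℝ (fun _ : Fin k => Rn n) V
  | 0, _, T => T
  | j + 1, _, T => plugIn v j (T.curryLeft v)

/-- The set of Hölder ratios `‖g x − g y‖ / ω(‖x−y‖)` over distinct pairs in `E`. -/
def ratioSet {n : ℕ} {W : Type*} [NormedAddCommGroup W] (ω : ℝ → ℝ)
    (g : Rn n → W) (E : Set (Rn n)) : Set ℝ :=
  {r | ∃ x ∈ E, ∃ y ∈ E, x ≠ y ∧ r = ‖g x - g y‖ / ω ‖x - y‖}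

/-- `g ∈ C^{0,ω}(E,W)`. -/
def MemHolderOn {n : ℕ} {W : Type*} [NormedAddCommGroup W] (ω : ℝ → ℝ)
    (g : Rn n → W) (E : Set (Rn n)) : Prop :=
  BddAbove (ratioSet ω g E)

/-- The seminorm `‖g‖_{C^{0,ω}(E,W)}`. -/
def holderNormOn {n : ℕ} {W : Type*} [NormedAddCommGroup W] (ω : ℝ → ℝ)
    (g : Rn n → W) (E : Set (Rn n)) : ℝ :=
  sSup (ratioSet ω g E)

/-- The Hölder ratio of `g` vanishes uniformly as `|x−y| → 0` (over pairs in `E`). -/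
def VanishSmallOn {n : ℕ} {W : Type*} [NormedAddCommGroup W] (ω : ℝ → ℝ)
    (g : Rn n → W) (E : Set (Rn n)) : Prop :=
  ∀ ε : ℝ, 0 < ε → ∃ δ : ℝ, 0 < δ ∧ ∀ x ∈ E, ∀ y ∈ E, x ≠ y → ‖x - y‖ ≤ δ →
    ‖g x - g y‖ ≤ ε * ω ‖x - y‖

/-- The Hölder ratio of `g` vanishes uniformly as `|x−y| → ∞` (over pairs in `E`). -/
def VanishLargeOn {n : ℕ} {W : Type*} [NormedAddCommGroup W] (ω : ℝ → ℝ)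
    (g : Rn n → W) (E : Set (Rn n)) : Prop :=
  ∀ ε : ℝ, 0 < ε → ∃ K : ℝ, ∀ x ∈ E, ∀ y ∈ E, x ≠ y → K ≤ ‖x - y‖ →
    ‖g x - g y‖ ≤ ε * ω ‖x - y‖

/-- The Hölder ratio of `g` vanishes uniformly as `min(|x|,|y|) → ∞` (over pairs in `E`). -/
def VanishFarOn {n : ℕ} {W : Type*} [NormedAddCommGroup W] (ω : ℝ → ℝ)
    (g : Rn n → W) (E : Set (Rn n)) : Prop :=
  ∀ ε : ℝ, 0 < ε → ∃ K : ℝ, ∀ x ∈ E, ∀ y ∈ E, x ≠ y → K ≤ min ‖x‖ ‖y‖ →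
    ‖g x - g y‖ ≤ ε * ω ‖x - y‖

/-- `R(A,x,y)`: the Taylor-remainder quantity of an `m`-jet at distinct points `x, y`. -/
def jetR {n : ℕ} {V : Type*} [NormedAddCommGroup V] [NormedSpace ℝ V]
    (A : Rn n → FormalMultilinearSeries ℝ (Rn n) V) (m : ℕ) (x y : Rn n) : ℝ :=
  (Finset.range (m + 1)).sup' Finset.nonempty_range_add_one fun k =>
    ‖A x k - ∑ j ∈ Finset.range (m - k + 1),
        (j.factorial : ℝ)⁻¹ • plugIn (x - y) j (A y (k + j))‖ / ‖x - y‖ ^ (m - k)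

/-- The set of ratios `R(A,x,y)/ω(|x−y|)` over distinct pairs in `E`. -/
def jetRatioSet {n : ℕ} {V : Type*} [NormedAddCommGroup V] [NormedSpace ℝ V] (ω : ℝ → ℝ)
    (A : Rn n → FormalMultilinearSeries ℝ (Rn n) V) (m : ℕ) (E : Set (Rn n)) : Set ℝ :=
  {r | ∃ x ∈ E, ∃ y ∈ E, x ≠ y ∧ r = jetR A m x y / ω ‖x - y‖}

/-- Each component `A_k`, `k ≤ m`, of the jet is a symmetric multilinear map on `E`. -/
def JetSymmOn {n : ℕ} {V : Type*} [NormedAddCommGroup V] [NormedSpace ℝ V]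
    (A : Rn n → FormalMultilinearSeries ℝ (Rn n) V) (m : ℕ) (E : Set (Rn n)) : Prop :=
  ∀ x ∈ E, ∀ k ≤ m, ∀ (σ : Equiv.Perm (Fin k)) (v : Fin k → Rn n),
    A x k (fun i => v (σ i)) = A x k v

/-- `A ∈ J^{m,ω}(E,V)`: a symmetric `m`-jet on `E` with finite jet seminorm. -/
def MemJetOn {n : ℕ} {V : Type*} [NormedAddCommGroup V] [NormedSpace ℝ V] (ω : ℝ → ℝ)
    (A : Rn n → FormalMultilinearSeries ℝ (Rn n) V) (m : ℕ) (E : Set (Rn n)) : Prop :=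
  JetSymmOn A m E ∧ BddAbove (jetRatioSet ω A m E)

/-- The jet seminorm `‖A‖_{J^{m,ω}(E,V)}`. -/
def jetNormOn {n : ℕ} {V : Type*} [NormedAddCommGroup V] [NormedSpace ℝ V] (ω : ℝ → ℝ)
    (A : Rn n → FormalMultilinearSeries ℝ (Rn n) V) (m : ℕ) (E : Set (Rn n)) : ℝ :=
  sSup (jetRatioSet ω A m E)

/-- `R(A,x,y)/ω(|x−y|)` vanishes uniformly as `|x−y| → 0`. -/
def JetVanishSmallOn {n : ℕ} {V : Type*} [NormedAddCommGroup V] [NormedSpace ℝ V] (ω : ℝ → ℝ)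
    (A : Rn n → FormalMultilinearSeries ℝ (Rn n) V) (m : ℕ) (E : Set (Rn n)) : Prop :=
  ∀ ε : ℝ, 0 < ε → ∃ δ : ℝ, 0 < δ ∧ ∀ x ∈ E, ∀ y ∈ E, x ≠ y → ‖x - y‖ ≤ δ →
    jetR A m x y ≤ ε * ω ‖x - y‖

/-- `R(A,x,y)/ω(|x−y|)` vanishes uniformly as `|x−y| → ∞`. -/
def JetVanishLargeOn {n : ℕ} {V : Type*} [NormedAddCommGroup V] [NormedSpace ℝ V] (ω : ℝ → ℝ)
    (A : Rn n → FormalMultilinearSeries ℝ (Rn n) V) (m : ℕ) (E : Set (Rn n)) : Prop :=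
  ∀ ε : ℝ, 0 < ε → ∃ K : ℝ, ∀ x ∈ E, ∀ y ∈ E, x ≠ y → K ≤ ‖x - y‖ →
    jetR A m x y ≤ ε * ω ‖x - y‖

/-- `R(A,x,y)/ω(|x−y|)` vanishes uniformly as `min(|x|,|y|) → ∞`. -/
def JetVanishFarOn {n : ℕ} {V : Type*} [NormedAddCommGroup V] [NormedSpace ℝ V] (ω : ℝ → ℝ)
    (A : Rn n → FormalMultilinearSeries ℝ (Rn n) V) (m : ℕ) (E : Set (Rn n)) : Prop :=
  ∀ ε : ℝ, 0 < ε → ∃ K : ℝ, ∀ x ∈ E, ∀ y ∈ E, x ≠ y → K ≤ min ‖x‖ ‖y‖ →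
    jetR A m x y ≤ ε * ω ‖x - y‖

/-- `F` extends the `m`-jet `A` on `E`: `D^k F = A_k` on `E` for `k = 0,…,m`. -/
def ExtendsJetOn {n : ℕ} {V : Type*} [NormedAddCommGroup V] [NormedSpace ℝ V]
    (F : Rn n → V) (A : Rn n → FormalMultilinearSeries ℝ (Rn n) V) (m : ℕ)
    (E : Set (Rn n)) : Prop :=
  ∀ y ∈ E, ∀ k ≤ m, iteratedFDeriv ℝ k F y = A y k

/-- `F ∈ C^{m,ω}(ℝⁿ,V)`. -/
def MemCmOmega {n : ℕ} {V : Type*} [NormedAddCommGroup V] [NormedSpace ℝ V] (ω : ℝ → ℝ)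
    (F : Rn n → V) (m : ℕ) : Prop :=
  ContDiff ℝ m F ∧ MemHolderOn ω (iteratedFDeriv ℝ m F) Set.univ



section AuxHolderExt
open Metric MeasureTheory

noncomputable section


variable {ω : ℝ → ℝ} {Cω : ℝ}

lemma IsModulus.one_le (hω : IsModulus ω Cω) : 1 ≤ Cω := by
  have h := hω.2.2.2 1 1 one_pos le_rfl
  have h1 : 0 < ω 1 := hω.1 1 one_pos
  have h2 : 0 < (1:ℝ) / ω 1 := by positivity
  nlinarith

/-- cross-multiplied modulus inequality : for 0 < s ≤ t, ω t * s ≤ Cω * t * ω s. -/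
lemma IsModulus.ratio (hω : IsModulus ω Cω) {s t : ℝ} (hs : 0 < s) (hst : s ≤ t) :
    ω t * s ≤ Cω * t * ω s := by
  have h := hω.2.2.2 s t hs hst
  have h1 : 0 < ω s := hω.1 s hs
  have h2 : 0 < ω t := hω.1 t (hs.trans_le hst)
  rw [div_le_iff₀ h1] at h
  have e : Cω * (t / ω t) * ω s * ω t = Cω * t * ω s * (ω t / ω t) := by ring
  rw [div_self h2.ne', mul_one] at e
  nlinarith [mul_le_mul_of_nonneg_right h h2.le]

/-- scaling: ω (a * t) ≤ Cω * a * ω t for a ≥ 1, t > 0 -/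
lemma IsModulus.scale (hω : IsModulus ω Cω) {a t : ℝ} (ha : 1 ≤ a) (ht : 0 < t) :
    ω (a * t) ≤ Cω * a * ω t := by
  have hat : 0 < a * t := by nlinarith
  have h := hω.ratio ht (by nlinarith : t ≤ a * t)
  have h2 : 0 < ω (a * t) := hω.1 _ hat
  nlinarith

lemma IsModulus.small (hω : IsModulus ω Cω) {ε : ℝ} (hε : 0 < ε) :
    ∃ δ > 0, ∀ t : ℝ, 0 < t → t ≤ δ → ω t < ε := by
  have h := hω.2.2.1
  rw [Metric.tendsto_nhdsWithin_nhds] at h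
  obtain ⟨δ, hδ, hh⟩ := h ε hε
  refine ⟨δ/2, by linarith, fun t ht htδ => ?_⟩
  have := hh (mem_Ioi.mpr ht) (by rw [Real.dist_eq, sub_zero, abs_of_pos ht]; linarith)
  rw [Real.dist_eq, sub_zero] at this
  exact (le_abs_self _).trans_lt this

variable {X : Type*} [MetricSpace X] {V : Type*} [NormedAddCommGroup V] [NormedSpace ℝ V]
  [CompleteSpace V]

lemma exists_closure_extension (hω : IsModulus ω Cω) {E : Set X} {f : X → V} {M : ℝ}
    (hM : 0 ≤ M) (hf : ∀ x ∈ E, ∀ y ∈ E, x ≠ y → ‖f x - f y‖ ≤ M * ω (dist x y)) :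
    ∃ fb : X → V, (∀ x ∈ E, fb x = f x) ∧
      (∀ x ∈ closure E, ∀ y ∈ closure E, x ≠ y →
        ‖fb x - fb y‖ ≤ 2 * Cω * M * ω (dist x y)) ∧
      (∀ x ∈ closure E, Tendsto f (𝓝[E] x) (𝓝 (fb x))) := by
  classical
  have hd : ∀ a ∈ E, ∀ b ∈ E, dist (f a) (f b) ≤ M * ω (dist a b) ∨ a = b := by
    intro a ha b hb
    rcases eq_or_ne a b with rfl | hne
    · exact Or.inr rfl
    · rw [dist_eq_norm]; exact Or.inl (hf a ha b hb hne)
  have key : ∀ x ∈ closure E, ∃ v, Tendsto f (𝓝[E] x) (𝓝 v) := by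
    intro x hx
    have hne : (𝓝[E] x).NeBot := mem_closure_iff_nhdsWithin_neBot.1 hx
    have hc : Cauchy (Filter.map f (𝓝[E] x)) := by
      rw [Metric.cauchy_iff]
      refine ⟨Filter.map_neBot, fun ε hε => ?_⟩
      obtain ⟨δ, hδ, hδε⟩ := hω.small (ε := ε / (2 * (M + 1))) (div_pos hε (by nlinarith))
      refine ⟨f '' (E ∩ Metric.ball x (δ/2)), ?_, ?_⟩
      · rw [Filter.mem_map]
        have hmem : E ∩ Metric.ball x (δ/2) ∈ 𝓝[E] x := by
          exact inter_mem_nhdsWithin E (Metric.ball_mem_nhds x (by linarith))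
        exact Filter.mem_of_superset hmem fun z hz => Set.subset_preimage_image f _ hz
      · rintro _ ⟨a, ⟨haE, hax⟩, rfl⟩ _ ⟨b, ⟨hbE, hbx⟩, rfl⟩
        rcases hd a haE b hbE with h | rfl
        · rcases eq_or_lt_of_le (dist_nonneg (x := a) (y := b)) with h0 | hpos
          · have : a = b := by rwa [eq_comm, dist_eq_zero] at h0
            subst this; simpa using hε
          · have hab : dist a b ≤ δ := by
              calc dist a b ≤ dist a x + dist x b := dist_triangle a x b
                _ ≤ δ/2 + δ/2 := by
                    rw [dist_comm x b]
                    exact add_le_add (le_of_lt (Metric.mem_ball.mp hax))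
                      (le_of_lt (Metric.mem_ball.mp hbx))
                _ = δ := by ring
            have hω' := hδε _ hpos hab
            have hfrac : M / (2*(M+1)) < 1 := by
              rw [div_lt_one (by nlinarith)]; nlinarith
            calc dist (f a) (f b) ≤ M * ω (dist a b) := h
              _ ≤ M * (ε / (2*(M+1))) := by nlinarith [hω.1 _ hpos]
              _ = M / (2*(M+1)) * ε := by ring
              _ < 1 * ε := mul_lt_mul_of_pos_right hfrac hε
              _ = ε := one_mul ε
        · simpa using hε
    exact (CompleteSpace.complete hc).imp fun v hv => hv
  choose v hv using key
  have hclos : ∀ x (h : x ∈ closure E),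
      (if h' : x ∈ closure E then v x h' else f x) = v x h := fun x h => dif_pos h
  set fb : X → V := fun x => if h : x ∈ closure E then v x h else f x with hfbdef
  have htd : ∀ x ∈ closure E, Tendsto f (𝓝[E] x) (𝓝 (fb x)) := by
    intro x hx
    have : fb x = v x hx := dif_pos hx
    rw [this]; exact hv x hx
  have hfbE : ∀ x ∈ E, fb x = f x := by
    intro x hx
    have hxc : x ∈ closure E := subset_closure hx
    haveI : (𝓝[E] x).NeBot := mem_closure_iff_nhdsWithin_neBot.1 hxc
    have hcont : Tendsto f (𝓝[E] x) (𝓝 (f x)) := by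
      rw [Metric.tendsto_nhdsWithin_nhds]
      intro ε hε
      obtain ⟨δ, hδ, hδε⟩ := hω.small (ε := ε/(M+1)) (div_pos hε (by nlinarith))
      refine ⟨δ, hδ, fun {z} hz hdz => ?_⟩
      rcases eq_or_ne z x with rfl | hne
      · simpa using hε
      · have hpos : 0 < dist z x := dist_pos.mpr hne
        have hfrac : M/(M+1) < 1 := by rw [div_lt_one (by nlinarith)]; nlinarith
        calc dist (f z) (f x) = ‖f z - f x‖ := by rw [dist_eq_norm]
          _ ≤ M * ω (dist z x) := hf z hz x hx hne
          _ ≤ M * (ε/(M+1)) := by nlinarith [hδε _ hpos hdz.le, hω.1 _ hpos]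
          _ = M/(M+1) * ε := by ring
          _ < 1 * ε := mul_lt_mul_of_pos_right hfrac hε
          _ = ε := one_mul ε
    exact tendsto_nhds_unique (htd x hxc) hcont
  refine ⟨fb, hfbE, ?_, htd⟩
  intro x hx y hy hxy
  have htpos : 0 < dist x y := dist_pos.mpr hxy
  set t := dist x y with htdef
  have hrhs : 0 ≤ 2*Cω*M*ω t := by
    have h1 := hω.1 t htpos
    have h2 := hω.one_le
    exact mul_nonneg (mul_nonneg (mul_nonneg (by norm_num) (by linarith)) hM) h1.le
  have main : ∀ ε > 0, ‖fb x - fb y‖ ≤ 2*Cω*M*ω t + ε := by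
    intro ε hε
    obtain ⟨δ1, hδ1, h1⟩ := Metric.tendsto_nhdsWithin_nhds.1 (htd x hx) (ε/4) (by linarith)
    obtain ⟨δ2, hδ2, h2⟩ := Metric.tendsto_nhdsWithin_nhds.1 (htd y hy) (ε/4) (by linarith)
    obtain ⟨a, haE, hax⟩ := Metric.mem_closure_iff.1 hx (min δ1 (t/2)) (by positivity)
    obtain ⟨b, hbE, hby⟩ := Metric.mem_closure_iff.1 hy (min δ2 (t/2)) (by positivity)
    have hfa : dist (f a) (fb x) < ε/4 :=
      h1 haE (by rw [dist_comm]; exact hax.trans_le (min_le_left _ _))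
    have hfb' : dist (f b) (fb y) < ε/4 :=
      h2 hbE (by rw [dist_comm]; exact hby.trans_le (min_le_left _ _))
    have hab : dist a b ≤ 2*t := by
      calc dist a b ≤ dist a x + dist x y + dist y b := dist_triangle4 a x y b
        _ ≤ t/2 + t + t/2 := by
            have h3 : dist a x ≤ t/2 := by
              rw [dist_comm]; exact (hax.trans_le (min_le_right _ _)).le
            have h4 : dist y b ≤ t/2 := (hby.trans_le (min_le_right _ _)).le
            linarith
        _ = 2*t := by ring
    have hfab : ‖f a - f b‖ ≤ 2*Cω*M*ω t := by
      rcases eq_or_ne a b with rfl | hne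
      · simpa using hrhs
      · have hs := hω.scale (a := 2) (t := t) one_le_two htpos
        have hm : ω (dist a b) ≤ ω (2*t) := hω.2.1 _ _ (dist_pos.mpr hne) hab
        calc ‖f a - f b‖ ≤ M * ω (dist a b) := hf a haE b hbE hne
          _ ≤ 2*Cω*M*ω t := by nlinarith
    have tri : dist (fb x) (fb y) ≤ dist (fb x) (f a) + dist (f a) (f b) + dist (f b) (fb y) :=
      dist_triangle4 _ _ _ _
    rw [dist_comm (fb x) (f a), dist_eq_norm (f a) (f b)] at tri
    rw [← dist_eq_norm]
    linarith [hfa, hfb', hfab, tri]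
  exact le_of_forall_pos_le_add main

end

noncomputable section


variable {V : Type*} [NormedAddCommGroup V] [NormedSpace ℝ V] [CompleteSpace V]

/-- Average of a function close to a constant is close to the constant. -/
lemma avg_close_const {α : Type*} [MeasurableSpace α] (μ : Measure α) {g : α → V} {B : Set α}
    (hμ0 : μ B ≠ 0) (hμt : μ B ≠ ⊤) (hg : IntegrableOn g B μ)
    {c : V} {Q : ℝ} (hb : ∀ z ∈ B, ‖g z - c‖ ≤ Q) :
    ‖(μ B).toReal⁻¹ • (∫ z in B, g z ∂μ) - c‖ ≤ Q := by
  set v := (μ B).toReal with hv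
  have hvpos : 0 < v := ENNReal.toReal_pos hμ0 hμt
  have hcint : IntegrableOn (fun _ => c) B μ := integrableOn_const hμt
  have hhint : IntegrableOn (fun z => g z - c) B μ := hg.sub hcint
  have hsub : ∫ z in B, (g z - c) ∂μ = (∫ z in B, g z ∂μ) - v • c := by
    rw [integral_sub hg hcint, setIntegral_const]; rfl
  have hnorm : ‖∫ z in B, (g z - c) ∂μ‖ ≤ Q * v :=
    norm_setIntegral_le_of_norm_le_const hμt.lt_top (fun z hz => hb z hz)
  have heq : (μ B).toReal⁻¹ • (∫ z in B, g z ∂μ) - c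
      = v⁻¹ • (∫ z in B, (g z - c) ∂μ) := by
    rw [hsub, smul_sub, smul_smul, inv_mul_cancel₀ hvpos.ne', one_smul]
  rw [heq, norm_smul, Real.norm_eq_abs, abs_of_pos (inv_pos.2 hvpos)]
  calc v⁻¹ * ‖∫ z in B, (g z - c) ∂μ‖ ≤ v⁻¹ * (Q * v) :=
        mul_le_mul_of_nonneg_left hnorm (inv_pos.2 hvpos).le
    _ = Q := by field_simp

/-- Difference of two averages, controlled by symmetric-difference measures. -/
lemma avg_diff_bound {α : Type*} [MeasurableSpace α] (μ : Measure α) {g : α → V} {B B' : Set α}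
    (hBm : MeasurableSet B) (hB'm : MeasurableSet B')
    (hμ0 : μ B ≠ 0) (hμt : μ B ≠ ⊤) (hμ0' : μ B' ≠ 0) (hμt' : μ B' ≠ ⊤)
    (hg : IntegrableOn g B μ) (hg' : IntegrableOn g B' μ)
    {c : V} {Q : ℝ} (hQ : 0 ≤ Q) (hb : ∀ z ∈ B ∪ B', ‖g z - c‖ ≤ Q) :
    ‖(μ B).toReal⁻¹ • (∫ z in B, g z ∂μ) - (μ B').toReal⁻¹ • (∫ z in B', g z ∂μ)‖
      ≤ Q * ((μ (B \ B')).toReal / (μ B).toReal + (μ (B' \ B)).toReal / (μ B').toReal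
          + |(μ B).toReal - (μ B').toReal| / (μ B).toReal) := by
  classical
  set v := (μ B).toReal with hv
  set v' := (μ B').toReal with hv'
  have hvpos : 0 < v := ENNReal.toReal_pos hμ0 hμt
  have hv'pos : 0 < v' := ENNReal.toReal_pos hμ0' hμt'
  have hcint : IntegrableOn (fun _ => c) B μ := integrableOn_const hμt
  have hcint' : IntegrableOn (fun _ => c) B' μ := integrableOn_const hμt'
  have hhint : IntegrableOn (fun z => g z - c) B μ := hg.sub hcint
  have hhint' : IntegrableOn (fun z => g z - c) B' μ := hg'.sub hcint'
  set I := ∫ z in B, (g z - c) ∂μ with hI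
  set I' := ∫ z in B', (g z - c) ∂μ with hI'
  set J := ∫ z in B ∩ B', (g z - c) ∂μ with hJ
  -- norms of pieces
  have hnormS : ∀ {S : Set α}, S ⊆ B ∪ B' → μ S ≠ ⊤ →
      AEStronglyMeasurable (fun z => g z - c) (μ.restrict S) →
      ‖∫ z in S, (g z - c) ∂μ‖ ≤ Q * (μ S).toReal := by
    intro S hSsub hSt hSm
    exact norm_setIntegral_le_of_norm_le_const hSt.lt_top (fun z hz => hb z (hSsub hz))
  have hsplit : I = J + ∫ z in B \ B', (g z - c) ∂μ :=
    (integral_inter_add_diff hB'm hhint).symm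
  have hsplit' : I' = J + ∫ z in B' \ B, (g z - c) ∂μ := by
    have := (integral_inter_add_diff hBm hhint').symm
    rwa [inter_comm] at this
  have hdiffm : μ (B \ B') ≠ ⊤ := fun h => hμt (by
    exact eq_top_iff.2 (h ▸ measure_mono diff_subset))
  have hdiffm' : μ (B' \ B) ≠ ⊤ := fun h => hμt' (by
    exact eq_top_iff.2 (h ▸ measure_mono diff_subset))
  have hintm : μ (B ∩ B') ≠ ⊤ := fun h => hμt (by
    exact eq_top_iff.2 (h ▸ measure_mono inter_subset_left))
  have h1 : ‖I - J‖ ≤ Q * (μ (B \ B')).toReal := by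
    rw [hsplit, add_sub_cancel_left]
    exact hnormS (diff_subset.trans subset_union_left) hdiffm
      (hhint.mono_set diff_subset).aestronglyMeasurable
  have h2 : ‖I' - J‖ ≤ Q * (μ (B' \ B)).toReal := by
    rw [hsplit', add_sub_cancel_left]
    exact hnormS (diff_subset.trans subset_union_right) hdiffm'
      (hhint'.mono_set diff_subset).aestronglyMeasurable
  have h3 : ‖J‖ ≤ Q * v' := by
    have hJle : ‖J‖ ≤ Q * (μ (B ∩ B')).toReal :=
      hnormS (inter_subset_left.trans subset_union_left) hintm
        (hhint.mono_set inter_subset_left).aestronglyMeasurable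
    refine hJle.trans (mul_le_mul_of_nonneg_left ?_ hQ)
    exact ENNReal.toReal_mono hμt' (measure_mono inter_subset_right)
  -- averages shifted by c
  have havg : (μ B).toReal⁻¹ • (∫ z in B, g z ∂μ) - (μ B').toReal⁻¹ • (∫ z in B', g z ∂μ)
      = v⁻¹ • (I - J) - v'⁻¹ • (I' - J) + (v⁻¹ - v'⁻¹) • J := by
    have e1 : ∫ z in B, g z ∂μ = I + v • c := by
      rw [hI, integral_sub hg hcint, setIntegral_const]; change _ = _ - v • c + v • c; abel
    have e2 : ∫ z in B', g z ∂μ = I' + v' • c := by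
      rw [hI', integral_sub hg' hcint', setIntegral_const]; change _ = _ - v' • c + v' • c; abel
    rw [e1, e2, smul_add, smul_add, smul_smul, smul_smul,
      inv_mul_cancel₀ hvpos.ne', inv_mul_cancel₀ hv'pos.ne', one_smul,
      sub_smul, smul_sub, smul_sub]
    abel
  rw [havg]
  have hb1 : ‖v⁻¹ • (I - J)‖ ≤ Q * ((μ (B \ B')).toReal / v) := by
    rw [norm_smul, Real.norm_eq_abs, abs_of_pos (inv_pos.2 hvpos)]
    rw [div_eq_inv_mul, ← mul_assoc, mul_comm Q v⁻¹, mul_assoc]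
    exact mul_le_mul_of_nonneg_left h1 (inv_pos.2 hvpos).le
  have hb2 : ‖v'⁻¹ • (I' - J)‖ ≤ Q * ((μ (B' \ B)).toReal / v') := by
    rw [norm_smul, Real.norm_eq_abs, abs_of_pos (inv_pos.2 hv'pos)]
    rw [div_eq_inv_mul, ← mul_assoc, mul_comm Q v'⁻¹, mul_assoc]
    exact mul_le_mul_of_nonneg_left h2 (inv_pos.2 hv'pos).le
  have hb3 : ‖(v⁻¹ - v'⁻¹) • J‖ ≤ Q * (|v - v'| / v) := by
    rw [norm_smul, Real.norm_eq_abs]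
    have habs : |v⁻¹ - v'⁻¹| = |v - v'| / (v * v') := by
      rw [show v⁻¹ - v'⁻¹ = (v' - v)/(v * v') by field_simp]
      rw [abs_div, abs_of_pos (by positivity : (0:ℝ) < v * v'), abs_sub_comm]
    rw [habs]
    calc |v - v'| / (v * v') * ‖J‖ ≤ |v - v'| / (v * v') * (Q * v') := by
          exact mul_le_mul_of_nonneg_left h3 (by positivity)
      _ = Q * (|v - v'| / v) := by field_simp
  calc ‖v⁻¹ • (I - J) - v'⁻¹ • (I' - J) + (v⁻¹ - v'⁻¹) • J‖
      ≤ ‖v⁻¹ • (I - J) - v'⁻¹ • (I' - J)‖ + ‖(v⁻¹ - v'⁻¹) • J‖ := norm_add_le _ _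
    _ ≤ ‖v⁻¹ • (I - J)‖ + ‖v'⁻¹ • (I' - J)‖ + ‖(v⁻¹ - v'⁻¹) • J‖ := by
        have := norm_sub_le (v⁻¹ • (I - J)) (v'⁻¹ • (I' - J))
        linarith
    _ ≤ Q * ((μ (B \ B')).toReal / v) + Q * ((μ (B' \ B)).toReal / v') + Q * (|v - v'| / v) := by
        linarith
    _ = Q * ((μ (B \ B')).toReal / v + (μ (B' \ B)).toReal / v' + |v - v'| / v) := by ring

end

noncomputable section


lemma pow_sub_pow_le_aux {a b : ℝ} (hb : 0 ≤ b) (hab : b ≤ a) :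
    ∀ m : ℕ, a ^ m - b ^ m ≤ m * a ^ (m - 1) * (a - b) := by
  intro m
  induction m with
  | zero => simp
  | succ k ih =>
    have ha : 0 ≤ a := hb.trans hab
    rcases Nat.eq_zero_or_pos k with rfl | hk
    · simp
    · have hk1 : k - 1 + 1 = k := Nat.succ_pred_eq_of_pos hk
      have hak : a ^ (k-1) * a = a ^ k := by
        rw [← pow_succ, hk1]
      have h0 : a ^ (k+1) - b ^ (k+1) = a * (a ^ k - b ^ k) + (a - b) * b ^ k := by ring
      rw [h0]
      have h1 : a * (a ^ k - b ^ k) ≤ a * (k * a ^ (k-1) * (a-b)) :=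
        mul_le_mul_of_nonneg_left ih ha
      have h2 : (a - b) * b ^ k ≤ (a - b) * a ^ k := by
        have := pow_le_pow_left₀ hb hab k
        nlinarith [pow_nonneg hb k]
      have h3 : a * (k * a ^ (k-1) * (a-b)) = k * a ^ k * (a - b) := by
        rw [← hak]; ring
      push_cast
      nlinarith [pow_nonneg ha k]

lemma pow_div_helper (m : ℕ) {r : ℝ} (X : ℝ) (hr : 0 < r) :
    (m:ℝ) * r^(m-1) * X / r^m = (m:ℝ) * X / r := by
  cases m with
  | zero => simp
  | succ k =>
    rw [Nat.succ_sub_one, pow_succ]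
    rw [div_eq_div_iff (by positivity) (by positivity)]
    ring

lemma pow_sub_pow_le_of_le {m : ℕ} {a b R : ℝ} (hb : 0 ≤ b) (hab : b ≤ a) (haR : a ≤ R) :
    a ^ m - b ^ m ≤ m * R ^ (m-1) * (a - b) := by
  refine (pow_sub_pow_le_aux hb hab m).trans ?_
  have h1 : a^(m-1) ≤ R^(m-1) := pow_le_pow_left₀ (hb.trans hab) haR _
  have h2 : (m:ℝ) * a^(m-1) ≤ m * R^(m-1) := mul_le_mul_of_nonneg_left h1 (Nat.cast_nonneg m)
  exact mul_le_mul_of_nonneg_right h2 (sub_nonneg.2 hab)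

variable {n : ℕ}

lemma Rn.nontrivial (hn : 0 < n) : Nontrivial (Rn n) := by
  refine ⟨⟨0, EuclideanSpace.single ⟨0, hn⟩ 1, fun h => ?_⟩⟩
  have := congrFun (congrArg (fun v : Rn n => (v : Fin n → ℝ)) h) ⟨0, hn⟩
  simp [EuclideanSpace.single] at this

lemma Rn.vol_ball (hn : 0 < n) (x : Rn n) {ρ : ℝ} (hρ : 0 ≤ ρ) :
    (volume (ball x ρ)).toReal = ρ^n * (volume (ball (0 : Rn n) 1)).toReal := by
  haveI := Rn.nontrivial hn
  rw [Measure.addHaar_ball volume x hρ, ENNReal.toReal_mul,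
    ENNReal.toReal_ofReal (by positivity), finrank_euclideanSpace_fin]

lemma Rn.v0_pos (hn : 0 < n) : 0 < (volume (ball (0 : Rn n) 1)).toReal :=
  ENNReal.toReal_pos (measure_ball_pos volume _ one_pos).ne' measure_ball_lt_top.ne

set_option maxHeartbeats 1000000 in
/-- The combined volume-ratio bound for two nearby balls of comparable radii. -/
lemma Rn.ball_ratio_bound (hn : 0 < n) {x y : Rn n} {r r' δ : ℝ}
    (hr : 0 < r) (hr' : 0 < r') (hδ0 : 0 ≤ δ)
    (hxy : dist x y ≤ δ) (hrr1 : r - δ/4 ≤ r') (hrr2 : r' ≤ r + δ/4) (hδr : δ ≤ r/2) :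
    (volume (ball x r \ ball y r')).toReal / (volume (ball x r)).toReal
      + (volume (ball y r' \ ball x r)).toReal / (volume (ball y r')).toReal
      + |(volume (ball x r)).toReal - (volume (ball y r')).toReal| / (volume (ball x r)).toReal
      ≤ 5 * n * 2^n * (δ / r) := by
  set v₀ := (volume (ball (0 : Rn n) 1)).toReal with hv₀def
  have hv₀ : 0 < v₀ := Rn.v0_pos hn
  set B := ball x r with hB
  set B' := ball y r' with hB'
  have hvB : (volume B).toReal = r^n * v₀ := Rn.vol_ball hn x hr.le
  have hvB' : (volume B').toReal = r'^n * v₀ := Rn.vol_ball hn y hr'.le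
  set s : ℝ := r' - δ with hs
  set s' : ℝ := r - δ with hs'
  have hspos : 0 < s := by simp only [hs]; linarith
  have hs'pos : 0 < s' := by simp only [hs']; linarith
  -- inclusions
  have hsub1 : ball x s ⊆ B ∩ B' := by
    intro z hz
    rw [mem_ball] at hz
    constructor
    · rw [hB, mem_ball]; have : s ≤ r := by simp only [hs]; linarith
      linarith
    · rw [hB', mem_ball]
      calc dist z y ≤ dist z x + dist x y := dist_triangle z x y
        _ < s + δ := by linarith
        _ = r' := by simp [hs]
  have hsub2 : ball y s' ⊆ B ∩ B' := by
    intro z hz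
    rw [mem_ball] at hz
    constructor
    · rw [hB, mem_ball]
      calc dist z x ≤ dist z y + dist y x := dist_triangle z y x
        _ < s' + δ := by rw [dist_comm y x]; linarith
        _ = r := by simp [hs']
    · rw [hB', mem_ball]; have : s' ≤ r' := by simp only [hs']; linarith
      linarith
  -- measures finite
  have hfin : ∀ S : Set (Rn n), S ⊆ B → volume S ≠ ⊤ :=
    fun S hS => ((measure_mono hS).trans_lt measure_ball_lt_top).ne
  have hfin' : ∀ S : Set (Rn n), S ⊆ B' → volume S ≠ ⊤ :=
    fun S hS => ((measure_mono hS).trans_lt measure_ball_lt_top).ne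
  -- diff measure identities
  have hkey : ∀ (W W' : Set (Rn n)), MeasurableSet W' → volume W ≠ ⊤ →
      (volume (W ∩ W')).toReal + (volume (W \ W')).toReal = (volume W).toReal := by
    intro W W' hW' hWt
    rw [← ENNReal.toReal_add (fun h => hWt (by
        exact eq_top_iff.2 (h ▸ measure_mono inter_subset_left)))
      (fun h => hWt (by exact eq_top_iff.2 (h ▸ measure_mono diff_subset)))]
    rw [measure_inter_add_diff W hW']
  have e1 : (volume (B ∩ B')).toReal + (volume (B \ B')).toReal = r^n * v₀ := by
    rw [hkey B B' measurableSet_ball (hfin B (subset_refl B)), hvB]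
  have e2 : (volume (B' ∩ B)).toReal + (volume (B' \ B)).toReal = r'^n * v₀ := by
    rw [hkey B' B measurableSet_ball (hfin' B' (subset_refl B')), hvB']
  have hγ1 : s^n * v₀ ≤ (volume (B ∩ B')).toReal := by
    rw [← Rn.vol_ball hn x hspos.le]
    exact ENNReal.toReal_mono (hfin _ inter_subset_left) (measure_mono hsub1)
  have hγ2 : s'^n * v₀ ≤ (volume (B' ∩ B)).toReal := by
    rw [← Rn.vol_ball hn y hs'pos.le]
    have : ball y s' ⊆ B' ∩ B := fun z hz => ⟨(hsub2 hz).2, (hsub2 hz).1⟩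
    exact ENNReal.toReal_mono (hfin' _ inter_subset_left) (measure_mono this)
  -- power estimates
  have hsr : s ≤ r := by simp only [hs]; linarith
  have hnr : 0 ≤ (n:ℝ) * r^(n-1) := mul_nonneg (Nat.cast_nonneg n) (pow_nonneg hr.le _)
  have hnr' : 0 ≤ (n:ℝ) * r'^(n-1) := mul_nonneg (Nat.cast_nonneg n) (pow_nonneg hr'.le _)
  have hn2r : 0 ≤ (n:ℝ) * (2*r)^(n-1) := mul_nonneg (Nat.cast_nonneg n) (pow_nonneg (by linarith) _)
  have hp1 : r^n - s^n ≤ n * r^(n-1) * (5*δ/4) := by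
    refine (pow_sub_pow_le_of_le hspos.le hsr le_rfl).trans ?_
    exact mul_le_mul_of_nonneg_left (by simp only [hs]; linarith) hnr
  have hs'r' : s' ≤ r' := by simp only [hs']; linarith
  have hp2 : r'^n - s'^n ≤ n * r'^(n-1) * (5*δ/4) := by
    refine (pow_sub_pow_le_of_le hs'pos.le hs'r' le_rfl).trans ?_
    exact mul_le_mul_of_nonneg_left (by simp only [hs']; linarith) hnr'
  have hp3 : |r^n - r'^n| ≤ n * (2*r)^(n-1) * (δ/4) := by
    rcases le_total r r' with h | h
    · rw [abs_sub_comm, abs_of_nonneg (sub_nonneg.2 (pow_le_pow_left₀ hr.le h n))]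
      refine (pow_sub_pow_le_of_le (R := 2*r) hr.le h (by linarith)).trans ?_
      exact mul_le_mul_of_nonneg_left (by linarith) hn2r
    · rw [abs_of_nonneg (sub_nonneg.2 (pow_le_pow_left₀ hr'.le h n))]
      refine (pow_sub_pow_le_of_le (R := 2*r) hr'.le h (by linarith)).trans ?_
      exact mul_le_mul_of_nonneg_left (by linarith) hn2r
  -- the three pieces
  set A1 := (volume (B \ B')).toReal with hA1
  set A2 := (volume (B' \ B)).toReal with hA2
  have hγ2' : s'^n * v₀ ≤ (volume (B ∩ B')).toReal := by
    rw [inter_comm] at hγ2; exact hγ2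
  have hA1le : A1 ≤ ((n:ℝ) * r^(n-1) * (5*δ/4)) * v₀ := by
    have h1 := mul_le_mul_of_nonneg_right hp1 hv₀.le
    rw [sub_mul] at h1
    have h2 : A1 = r^n * v₀ - (volume (B ∩ B')).toReal := by rw [← e1]; ring
    rw [h2]; linarith [hγ1]
  have hA2le : A2 ≤ ((n:ℝ) * r'^(n-1) * (5*δ/4)) * v₀ := by
    have h1 := mul_le_mul_of_nonneg_right hp2 hv₀.le
    rw [sub_mul] at h1
    have h2 : A2 = r'^n * v₀ - (volume (B' ∩ B)).toReal := by rw [← e2]; ring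
    rw [h2]; linarith [hγ2]
  have hr78 : 7*r/8 ≤ r' := by linarith
  have hp1' : A1 / (volume B).toReal ≤ (5/4) * ((n:ℝ) * δ / r) := by
    rw [hvB]
    calc A1 / (r^n * v₀) ≤ (((n:ℝ) * r^(n-1) * (5*δ/4)) * v₀) / (r^n * v₀) := by
          exact div_le_div_of_nonneg_right hA1le (by positivity) |>.trans_eq rfl
      _ = ((n:ℝ) * r^(n-1) * (5*δ/4)) / r^n := by
          rw [mul_div_mul_right _ _ hv₀.ne']
      _ = (n:ℝ) * (5*δ/4) / r := pow_div_helper n _ hr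
      _ = (5/4) * ((n:ℝ) * δ / r) := by ring
  have hp2' : A2 / (volume B').toReal ≤ 2 * ((n:ℝ) * δ / r) := by
    rw [hvB']
    calc A2 / (r'^n * v₀) ≤ (((n:ℝ) * r'^(n-1) * (5*δ/4)) * v₀) / (r'^n * v₀) :=
          div_le_div_of_nonneg_right hA2le (by positivity)
      _ = ((n:ℝ) * r'^(n-1) * (5*δ/4)) / r'^n := by
          rw [mul_div_mul_right _ _ hv₀.ne']
      _ = (n:ℝ) * (5*δ/4) / r' := pow_div_helper n _ hr'
      _ ≤ 2 * ((n:ℝ) * δ / r) := by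
          rw [div_le_iff₀ hr', ← sub_nonneg]
          have hnδ : 0 ≤ (n:ℝ) * δ := mul_nonneg (Nat.cast_nonneg n) hδ0
          have e : 2 * ((n:ℝ) * δ / r) * r' - (n:ℝ) * (5*δ/4)
              = ((n:ℝ)*δ) * (2*r'/r - 5/4) := by ring
          rw [e]
          apply mul_nonneg hnδ
          rw [sub_nonneg, le_div_iff₀ hr]
          nlinarith
  have hp3' : |(volume B).toReal - (volume B').toReal| / (volume B).toReal
      ≤ (2:ℝ)^(n-1)/4 * ((n:ℝ) * δ / r) := by
    rw [hvB, hvB']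
    have habs : |r^n * v₀ - r'^n * v₀| = |r^n - r'^n| * v₀ := by
      rw [← sub_mul, abs_mul, abs_of_pos hv₀]
    rw [habs]
    calc |r^n - r'^n| * v₀ / (r^n * v₀) ≤ ((n:ℝ) * (2*r)^(n-1) * (δ/4)) * v₀ / (r^n * v₀) :=
          div_le_div_of_nonneg_right (mul_le_mul_of_nonneg_right hp3 hv₀.le) (by positivity)
      _ = ((n:ℝ) * (2*r)^(n-1) * (δ/4)) / r^n := by rw [mul_div_mul_right _ _ hv₀.ne']
      _ = (2:ℝ)^(n-1) * ((n:ℝ) * r^(n-1) * (δ/4) / r^n) := by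
          rw [mul_pow]; ring
      _ = (2:ℝ)^(n-1) * ((n:ℝ) * (δ/4) / r) := by rw [pow_div_helper n _ hr]
      _ = (2:ℝ)^(n-1)/4 * ((n:ℝ) * δ / r) := by ring
  have h2n : (1:ℝ) ≤ 2^n := one_le_pow₀ one_le_two
  have h2n' : (2:ℝ)^(n-1) ≤ 2^n := pow_le_pow_right₀ (one_le_two : (1:ℝ) ≤ 2) (Nat.sub_le n 1)
  have hX : 0 ≤ (n:ℝ) * δ / r := by positivity
  have hsum : (5/4 : ℝ) + 2 + (2:ℝ)^(n-1)/4 ≤ 5 * 2^n := by nlinarith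
  calc A1 / (volume B).toReal + A2 / (volume B').toReal
        + |(volume B).toReal - (volume B').toReal| / (volume B).toReal
      ≤ (5/4) * ((n:ℝ) * δ / r) + 2 * ((n:ℝ) * δ / r) + (2:ℝ)^(n-1)/4 * ((n:ℝ) * δ / r) := by
        linarith
    _ = ((5/4 : ℝ) + 2 + (2:ℝ)^(n-1)/4) * ((n:ℝ) * δ / r) := by ring
    _ ≤ (5 * 2^n) * ((n:ℝ) * δ / r) := mul_le_mul_of_nonneg_right hsum hX
    _ = 5 * n * 2^n * (δ / r) := by ring

end

noncomputable section

open Filter Set Topology Metric MeasureTheory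

set_option maxHeartbeats 2000000 in
lemma exists_extension {n : ℕ} (hn : 0 < n) {V : Type*} [NormedAddCommGroup V]
    [NormedSpace ℝ V] [CompleteSpace V] {ω : ℝ → ℝ} {Cω : ℝ} (hω : IsModulus ω Cω)
    (hcoer : Tendsto ω atTop atTop) {E : Set (Rn n)} (hE : E.Nonempty)
    {fb : Rn n → V} {M : ℝ} (hM : 0 ≤ M)
    (hfb : ∀ x ∈ closure E, ∀ y ∈ closure E, x ≠ y → ‖fb x - fb y‖ ≤ M * ω (dist x y))
    (hvan : ∀ ε : ℝ, 0 < ε → ∃ K, ∀ x ∈ closure E, ∀ y ∈ closure E, x ≠ y →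
      K ≤ dist x y → ‖fb x - fb y‖ ≤ ε * ω (dist x y)) :
    ∃ (F : Rn n → V) (M₂ : ℝ),
      (∀ x y : Rn n, x ≠ y → ‖F x - F y‖ ≤ M₂ * ω (dist x y)) ∧
      (∀ ε : ℝ, 0 < ε → ∃ K, ∀ x y : Rn n, x ≠ y → K ≤ dist x y →
        ‖F x - F y‖ ≤ ε * ω (dist x y)) ∧
      (∀ x ∈ closure E, F x = fb x) := by
  classical
  haveI := Rn.nontrivial hn
  set D := closure E with hD
  have hDne : D.Nonempty := hE.closure
  have hDc : IsClosed D := isClosed_closure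
  set d : Rn n → ℝ := fun z => infDist z D with hddef
  have hd0 : ∀ z, 0 ≤ d z := fun z => infDist_nonneg
  have hdlip : ∀ z w, d z ≤ d w + dist z w := fun z w => infDist_le_infDist_add_dist
  have hdpos : ∀ z, z ∉ D → 0 < d z := fun z hz => (hDc.notMem_iff_infDist_pos hDne).1 hz
  have hd_le_dist : ∀ (z : Rn n), ∀ p ∈ D, d z ≤ dist z p := fun z p hp =>
    infDist_le_dist_of_mem hp
  -- dense sequence in D
  haveI : Nonempty ↥D := hDne.to_subtype
  obtain ⟨T, hTc, hTd⟩ := TopologicalSpace.exists_countable_dense ↥D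
  have hTne : T.Nonempty := hTd.nonempty
  obtain ⟨e, he⟩ := (hTc.image (Subtype.val : ↥D → Rn n)).exists_eq_range (hTne.image _)
  have heD : ∀ k, e k ∈ D := by
    intro k
    have : e k ∈ Subtype.val '' T := he ▸ mem_range_self k
    obtain ⟨q, _, hq⟩ := this
    rw [← hq]
    exact q.2
  have heDense : ∀ p ∈ D, ∀ ρ : ℝ, 0 < ρ → ∃ k, dist p (e k) < ρ := by
    intro p hp ρ hρ
    obtain ⟨q, hq1, hq2⟩ := Metric.dense_iff.1 hTd ⟨p, hp⟩ ρ hρ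
    have : (q : Rn n) ∈ Subtype.val '' T := mem_image_of_mem _ hq2
    rw [he] at this
    obtain ⟨k, hk⟩ := this
    refine ⟨k, ?_⟩
    have h2 := Metric.mem_ball.1 hq1
    rw [Subtype.dist_eq] at h2
    have h3 : dist p ((q : Rn n)) < ρ := by
      rw [dist_comm]
      exact h2
    have hek : e k = (q : Rn n) := by first | exact hk | exact hk.symm
    rw [hek]
    exact h3
  -- selection
  set P : ℕ → Rn n → Prop := fun k z => dist z (e k) ≤ 2 * d z ∨ z ∈ D with hPdef
  have hPex : ∀ z, ∃ k, P k z := by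
    intro z
    by_cases hz : z ∈ D
    · exact ⟨0, Or.inr hz⟩
    · have hdz := hdpos z hz
      obtain ⟨p, hpD, hpd⟩ := (infDist_lt_iff hDne).1
        (show infDist z D < (3/2) * d z by
          have : infDist z D = d z := rfl
          rw [this]; linarith)
      obtain ⟨k, hk⟩ := heDense p hpD (d z / 2) (by linarith)
      refine ⟨k, Or.inl ?_⟩
      calc dist z (e k) ≤ dist z p + dist p (e k) := dist_triangle _ _ _
        _ ≤ 2 * d z := by linarith
  set sel : Rn n → ℕ := fun z => Nat.find (hPex z) with hseldef
  have hselP : ∀ z, z ∉ D → dist z (e (sel z)) ≤ 2 * d z := by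
    intro z hz
    rcases Nat.find_spec (hPex z) with h | h
    · exact h
    · exact absurd h hz
  have hPm : ∀ k, MeasurableSet {z | P k z} := by
    intro k
    refine MeasurableSet.union ?_ hDc.measurableSet
    have hcl : IsClosed {z : Rn n | dist z (e k) - 2 * d z ≤ 0} := by
      refine isClosed_le ?_ continuous_const
      exact (continuous_id.dist continuous_const).sub
        (continuous_const.mul (continuous_infDist_pt D))
    have hset : {z : Rn n | dist z (e k) ≤ 2 * d z} = {z | dist z (e k) - 2 * d z ≤ 0} := by
      ext z; simp [sub_nonpos]
    show MeasurableSet {z : Rn n | dist z (e k) ≤ 2 * d z}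
    rw [hset]
    exact hcl.measurableSet
  have hselm : Measurable sel := by
    refine measurable_to_countable' (fun m => ?_)
    have hpre : sel ⁻¹' {m} = {z | P m z} ∩ ⋂ (j : ℕ) (_ : j < m), {z | P j z}ᶜ := by
      ext z
      simp only [mem_preimage, mem_singleton_iff, hseldef, Nat.find_eq_iff, mem_inter_iff,
        mem_setOf_eq, mem_iInter, mem_compl_iff]
    rw [hpre]
    exact (hPm m).inter (MeasurableSet.iInter fun j => MeasurableSet.iInter fun _ => (hPm j).compl)
  -- the rough extension g
  borelize V
  set g : Rn n → V := fun z => fb (e (sel z)) with hgdef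
  have hgm : Measurable g := (measurable_from_top (f := fun k : ℕ => fb (e k))).comp hselm
  have hgsm : StronglyMeasurable g := by
    rw [stronglyMeasurable_iff_measurable_separable]
    refine ⟨hgm, ((countable_range (fun k => fb (e k))).isSeparable).mono ?_⟩
    rintro _ ⟨z, rfl⟩
    exact ⟨sel z, rfl⟩
  -- averaged extension
  set avg : Rn n → V := fun x => (volume (ball x (d x / 4))).toReal⁻¹ •
    ∫ z in ball x (d x / 4), g z with havgdef
  set F : Rn n → V := fun x => if x ∈ D then fb x else avg x with hFdef
  have hFfb : ∀ x ∈ D, F x = fb x := fun x hx => if_pos hx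
  have hFavg : ∀ x, x ∉ D → F x = avg x := fun x hx => if_neg hx
  -- oscillation geometry
  have hosc : ∀ x, x ∉ D → ∀ q ∈ D, dist x q ≤ 2 * d x → ∀ z, dist z x ≤ d x / 2 →
      e (sel z) ∈ D ∧ dist (e (sel z)) q ≤ 6 * d x := by
    intro x hx q hq hxq z hzx
    have hdx := hdpos x hx
    have hzD : z ∉ D := by
      intro hzD
      have h1 : d x ≤ dist x z := hd_le_dist x z hzD
      rw [dist_comm] at h1
      linarith
    have hdzu : d z ≤ (3/2) * d x := by
      have := hdlip z x
      linarith
    have h1 : dist z (e (sel z)) ≤ 2 * d z := hselP z hzD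
    refine ⟨heD _, ?_⟩
    calc dist (e (sel z)) q ≤ dist (e (sel z)) z + dist z x + dist x q := dist_triangle4 _ _ _ _
      _ ≤ 2 * d z + d x / 2 + 2 * d x := by
          rw [dist_comm (e (sel z)) z]
          exact add_le_add (add_le_add h1 hzx) hxq
      _ ≤ 6 * d x := by linarith
  have exists_q : ∀ x, x ∉ D → ∃ q ∈ D, dist x q ≤ 2 * d x := by
    intro x hx
    have hdx := hdpos x hx
    obtain ⟨q, hq, hlt⟩ := (infDist_lt_iff hDne).1
      (show infDist x D < 2 * d x by
        have : infDist x D = d x := rfl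
        rw [this]; linarith)
    exact ⟨q, hq, hlt.le⟩
  -- integrability helper
  have hint : ∀ (x w : Rn n) (ρ : ℝ), (∀ z ∈ ball x ρ, ‖g z - fb w‖ ≤ (1:ℝ) * ‖g z - fb w‖) →
      (∀ z ∈ ball x ρ, ∃ Q0 : ℝ, True) → True := fun _ _ _ _ _ => trivial
  have hIntOn : ∀ (x : Rn n) (ρ : ℝ) (c : V) (Q : ℝ),
      (∀ z ∈ ball x ρ, ‖g z - c‖ ≤ Q) → IntegrableOn g (ball x ρ) volume := by
    intro x ρ c Q hb
    refine Integrable.mono'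
      (integrableOn_const measure_ball_lt_top.ne : IntegrableOn (fun _ => ‖c‖ + Q) _ _)
      (hgsm.aestronglyMeasurable.restrict) ?_
    refine (ae_restrict_iff' measurableSet_ball).2 (ae_of_all _ fun z hz => ?_)
    have h1 := hb z hz
    calc ‖g z‖ = ‖(g z - c) + c‖ := by rw [sub_add_cancel]
      _ ≤ ‖g z - c‖ + ‖c‖ := norm_add_le _ _
      _ ≤ ‖c‖ + Q := by linarith
  -- estimate: average vs boundary value
  have EST1 : ∀ x, x ∉ D → ∀ q ∈ D, dist x q ≤ 2 * d x → ∀ Q : ℝ, 0 ≤ Q →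
      (∀ p ∈ D, dist p q ≤ 6 * d x → ‖fb p - fb q‖ ≤ Q) →
      ‖avg x - fb q‖ ≤ Q := by
    intro x hx q hq hxq Q hQ0 hQ
    have hdx := hdpos x hx
    have hb : ∀ z ∈ ball x (d x / 4), ‖g z - fb q‖ ≤ Q := by
      intro z hz
      have hzx : dist z x ≤ d x / 2 := (mem_ball.1 hz).le.trans (by linarith)
      obtain ⟨h1, h2⟩ := hosc x hx q hq hxq z hzx
      exact hQ _ h1 h2
    exact avg_close_const volume (measure_ball_pos volume x (by linarith)).ne'
      measure_ball_lt_top.ne (hIntOn x _ (fb q) Q hb) hb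
  -- estimate: two averages
  have EST2 : ∀ x y, x ∉ D → y ∉ D → d y ≤ d x → dist x y ≤ d x / 8 →
      ∀ q ∈ D, dist x q ≤ 2 * d x → ∀ Q : ℝ, 0 ≤ Q →
      (∀ p ∈ D, dist p q ≤ 6 * d x → ‖fb p - fb q‖ ≤ Q) →
      ‖avg x - avg y‖ ≤ 5 * n * 2^n * Q * (dist x y / (d x / 4)) := by
    intro x y hx hy hdyx hδ q hq hxq Q hQ0 hQ
    have hdx := hdpos x hx
    have hdy := hdpos y hy
    have hδ0 : (0:ℝ) ≤ dist x y := dist_nonneg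
    have hlip1 := hdlip x y
    have hlip2 := hdlip y x
    rw [dist_comm y x] at hlip2
    have hUnion : ∀ z ∈ ball x (d x / 4) ∪ ball y (d y / 4), ‖g z - fb q‖ ≤ Q := by
      intro z hz
      have hzx : dist z x ≤ d x / 2 := by
        rcases hz with hz | hz
        · exact (mem_ball.1 hz).le.trans (by linarith)
        · have h1 := (mem_ball.1 hz).le
          calc dist z x ≤ dist z y + dist y x := dist_triangle _ _ _
            _ ≤ d y / 4 + dist x y := by rw [dist_comm y x]; linarith
            _ ≤ d x / 2 := by linarith
      obtain ⟨h1, h2⟩ := hosc x hx q hq hxq z hzx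
      exact hQ _ h1 h2
    have hintB : IntegrableOn g (ball x (d x / 4)) volume :=
      hIntOn x _ (fb q) Q (fun z hz => hUnion z (Or.inl hz))
    have hintB' : IntegrableOn g (ball y (d y / 4)) volume :=
      hIntOn y _ (fb q) Q (fun z hz => hUnion z (Or.inr hz))
    have hmain := avg_diff_bound volume measurableSet_ball measurableSet_ball
      (measure_ball_pos volume x (by linarith : (0:ℝ) < d x / 4)).ne' measure_ball_lt_top.ne
      (measure_ball_pos volume y (by linarith : (0:ℝ) < d y / 4)).ne' measure_ball_lt_top.ne
      hintB hintB' hQ0 hUnion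
    have hgeo := Rn.ball_ratio_bound hn (x := x) (y := y)
      (by linarith : (0:ℝ) < d x / 4) (by linarith : (0:ℝ) < d y / 4) hδ0 le_rfl
      (by linarith : d x / 4 - dist x y / 4 ≤ d y / 4)
      (by linarith : d y / 4 ≤ d x / 4 + dist x y / 4)
      (by linarith : dist x y ≤ (d x / 4) / 2)
    calc ‖avg x - avg y‖ ≤ Q * ((volume (ball x (d x/4) \ ball y (d y/4))).toReal
            / (volume (ball x (d x/4))).toReal
          + (volume (ball y (d y/4) \ ball x (d x/4))).toReal / (volume (ball y (d y/4))).toReal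
          + |(volume (ball x (d x/4))).toReal - (volume (ball y (d y/4))).toReal|
            / (volume (ball x (d x/4))).toReal) := hmain
      _ ≤ Q * (5 * n * 2^n * (dist x y / (d x / 4))) := mul_le_mul_of_nonneg_left hgeo hQ0
      _ = 5 * n * 2^n * Q * (dist x y / (d x / 4)) := by ring
  -- basic pair bound from the Hölder hypothesis
  have hQbasic : ∀ p ∈ D, ∀ q ∈ D, ∀ R : ℝ, 0 < R → dist p q ≤ R →
      ‖fb p - fb q‖ ≤ M * ω R + 0 := by
    intro p hp q hq R hR hle
    rw [add_zero]
    rcases eq_or_ne p q with rfl | hne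
    · simp only [sub_self, norm_zero]
      exact mul_nonneg hM (hω.1 R hR).le
    · exact (hfb p hp q hq hne).trans
        (mul_le_mul_of_nonneg_left (hω.2.1 _ _ (dist_pos.2 hne) hle) hM)
  set C₁ : ℝ := 5 * n * 2^n with hC₁def
  have hC₁0 : 0 ≤ C₁ := by rw [hC₁def]; positivity
  have hCω1 : 1 ≤ Cω := hω.one_le
  have hCω0 : 0 < Cω := lt_of_lt_of_le one_pos hCω1
  -- THE MASTER PAIR ESTIMATE
  have PAIR : ∀ a b : ℝ, 0 ≤ a → 0 ≤ b →
      (∀ p ∈ D, ∀ q ∈ D, ∀ R : ℝ, 0 < R → dist p q ≤ R → ‖fb p - fb q‖ ≤ a * ω R + b) →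
      ∀ x y : Rn n, x ≠ y →
        ‖F x - F y‖ ≤ (129 + 24 * C₁) * Cω * (a * ω (dist x y)) + (3 + C₁) * b := by
    intro a b ha hb hP
    have SUB_UD : ∀ x y, x ∉ D → y ∈ D →
        ‖avg x - fb y‖ ≤ 9 * Cω * (a * ω (dist x y)) + 2 * b := by
      intro x y hx hy
      have hdx := hdpos x hx
      obtain ⟨q, hqD, hq2⟩ := exists_q x hx
      have hxyne : x ≠ y := fun h => hx (h ▸ hy)
      have hδpos : 0 < dist x y := dist_pos.2 hxyne
      have hω6 : 0 < ω (6 * d x) := hω.1 _ (by linarith)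
      have hQ0 : (0:ℝ) ≤ a * ω (6 * d x) + b := add_nonneg (mul_nonneg ha hω6.le) hb
      have h1 : ‖avg x - fb q‖ ≤ a * ω (6 * d x) + b :=
        EST1 x hx q hqD hq2 _ hQ0 (fun p hp hd6 => hP p hp q hqD (6 * d x) (by linarith) hd6)
      have hdxy : d x ≤ dist x y := hd_le_dist x y hy
      have hm1 : ω (6 * d x) ≤ Cω * 6 * ω (dist x y) :=
        (hω.2.1 _ _ (by linarith) (by linarith)).trans (hω.scale (by norm_num) hδpos)
      have h2 : ‖fb q - fb y‖ ≤ a * ω (3 * dist x y) + b := by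
        refine hP q hqD y hy (3 * dist x y) (by linarith) ?_
        calc dist q y ≤ dist q x + dist x y := dist_triangle _ _ _
          _ ≤ 3 * dist x y := by rw [dist_comm q x]; linarith
      have hm2 : ω (3 * dist x y) ≤ Cω * 3 * ω (dist x y) := hω.scale (by norm_num) hδpos
      have tri : ‖avg x - fb y‖ ≤ ‖avg x - fb q‖ + ‖fb q - fb y‖ := by
        have h := dist_triangle (avg x) (fb q) (fb y)
        simpa [dist_eq_norm] using h
      have e1 : a * ω (6 * d x) ≤ a * (Cω * 6 * ω (dist x y)) := mul_le_mul_of_nonneg_left hm1 ha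
      have e2 : a * ω (3 * dist x y) ≤ a * (Cω * 3 * ω (dist x y)) :=
        mul_le_mul_of_nonneg_left hm2 ha
      nlinarith [tri, h1, h2, e1, e2]
    have SUB_UU : ∀ x y, x ∉ D → y ∉ D → x ≠ y → d y ≤ d x →
        ‖avg x - avg y‖ ≤ (129 + 24 * C₁) * Cω * (a * ω (dist x y)) + (3 + C₁) * b := by
      intro x y hx hy hxy hdyx
      have hdx := hdpos x hx
      have hdy := hdpos y hy
      have hδpos : 0 < dist x y := dist_pos.2 hxy
      have hωδ : 0 < ω (dist x y) := hω.1 _ hδpos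
      obtain ⟨q, hqD, hq2⟩ := exists_q x hx
      have hω6 : 0 < ω (6 * d x) := hω.1 _ (by linarith)
      have hQ0 : (0:ℝ) ≤ a * ω (6 * d x) + b := add_nonneg (mul_nonneg ha hω6.le) hb
      have hQ : ∀ p ∈ D, dist p q ≤ 6 * d x → ‖fb p - fb q‖ ≤ a * ω (6 * d x) + b :=
        fun p hp h6 => hP p hp q hqD (6 * d x) (by linarith) h6
      have hCaω : 0 ≤ Cω * (a * ω (dist x y)) :=
        mul_nonneg hCω0.le (mul_nonneg ha hωδ.le)
      by_cases hcase : dist x y ≤ d x / 8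
      · have hs := EST2 x y hx hy hdyx hcase q hqD hq2 _ hQ0 hQ
        set sδ := dist x y / (d x / 4) with hsδ
        have hsδ0 : 0 ≤ sδ := by positivity
        have hsδhalf : sδ ≤ 1/2 := by
          rw [hsδ, div_le_iff₀ (by linarith : (0:ℝ) < d x / 4)]
          linarith
        have hpart : ω (6 * d x) * sδ ≤ 24 * Cω * ω (dist x y) := by
          have hr := hω.ratio (s := dist x y) (t := 6 * d x) hδpos (by linarith)
          have h4 : 4 * (ω (6 * d x) * dist x y) ≤ 4 * (Cω * (6 * d x) * ω (dist x y)) := by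
            linarith
          have heqq : ω (6 * d x) * sδ = 4 * (ω (6 * d x) * dist x y) / d x := by
            rw [hsδ]; field_simp
          rw [heqq]
          calc 4 * (ω (6 * d x) * dist x y) / d x
              ≤ 4 * (Cω * (6 * d x) * ω (dist x y)) / d x :=
                div_le_div_of_nonneg_right h4 hdx.le
            _ = 24 * Cω * ω (dist x y) := by field_simp; ring
        have k0 : 5 * (n:ℝ) * 2^n * (a * ω (6 * d x) + b) * sδ
            = C₁ * (a * (ω (6 * d x) * sδ)) + C₁ * b * sδ := by rw [hC₁def]; ring
        have k1 : C₁ * (a * (ω (6 * d x) * sδ)) ≤ C₁ * (a * (24 * Cω * ω (dist x y))) :=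
          mul_le_mul_of_nonneg_left (mul_le_mul_of_nonneg_left hpart ha) hC₁0
        have k2 : C₁ * b * sδ ≤ C₁ * b * (1/2) :=
          mul_le_mul_of_nonneg_left hsδhalf (mul_nonneg hC₁0 hb)
        have k3 : 0 ≤ C₁ * (Cω * (a * ω (dist x y))) := mul_nonneg hC₁0 hCaω
        have k4 : 0 ≤ C₁ * b := mul_nonneg hC₁0 hb
        have k5 : 0 ≤ C₁ * b * sδ := mul_nonneg k4 hsδ0
        nlinarith [hs, k0, k1, k2, k3, k4, k5, hCaω, hb]
      · -- far apart relative to distance to D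
        obtain ⟨qy, hqyD, hqy2⟩ := exists_q y hy
        have hωy6 : 0 < ω (6 * d y) := hω.1 _ (by linarith)
        have hQ0y : (0:ℝ) ≤ a * ω (6 * d y) + b := add_nonneg (mul_nonneg ha hωy6.le) hb
        have h1 : ‖avg x - fb q‖ ≤ a * ω (6 * d x) + b := EST1 x hx q hqD hq2 _ hQ0 hQ
        have h3 : ‖avg y - fb qy‖ ≤ a * ω (6 * d y) + b :=
          EST1 y hy qy hqyD hqy2 _ hQ0y
            (fun p hp h6 => hP p hp qy hqyD (6 * d y) (by linarith) h6)
        have hdx8 : d x ≤ 8 * dist x y := by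
          have := not_le.1 hcase
          linarith
        have h2 : ‖fb q - fb qy‖ ≤ a * ω (33 * dist x y) + b := by
          refine hP q hqD qy hqyD _ (by linarith) ?_
          calc dist q qy ≤ dist q x + dist x y + dist y qy := dist_triangle4 _ _ _ _
            _ ≤ 2 * d x + dist x y + 2 * d y := by
                rw [dist_comm q x]
                exact add_le_add (add_le_add hq2 le_rfl) hqy2
            _ ≤ 33 * dist x y := by linarith
        have hm1 : ω (6 * d x) ≤ Cω * 48 * ω (dist x y) :=
          (hω.2.1 _ _ (by linarith) (by linarith : 6 * d x ≤ 48 * dist x y)).trans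
            (hω.scale (by norm_num) hδpos)
        have hm3 : ω (6 * d y) ≤ Cω * 48 * ω (dist x y) :=
          (hω.2.1 _ _ (by linarith) (by linarith : 6 * d y ≤ 48 * dist x y)).trans
            (hω.scale (by norm_num) hδpos)
        have hm2 : ω (33 * dist x y) ≤ Cω * 33 * ω (dist x y) := hω.scale (by norm_num) hδpos
        have tri : ‖avg x - avg y‖ ≤ ‖avg x - fb q‖ + ‖fb q - fb qy‖ + ‖avg y - fb qy‖ := by
          have h := dist_triangle4 (avg x) (fb q) (fb qy) (avg y)
          rw [dist_eq_norm, dist_eq_norm, dist_eq_norm, dist_eq_norm] at h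
          rw [← norm_neg (avg y - fb qy), neg_sub]
          linarith
        have e1 : a * ω (6 * d x) ≤ a * (Cω * 48 * ω (dist x y)) :=
          mul_le_mul_of_nonneg_left hm1 ha
        have e3 : a * ω (6 * d y) ≤ a * (Cω * 48 * ω (dist x y)) :=
          mul_le_mul_of_nonneg_left hm3 ha
        have e2 : a * ω (33 * dist x y) ≤ a * (Cω * 33 * ω (dist x y)) :=
          mul_le_mul_of_nonneg_left hm2 ha
        have k3 : 0 ≤ C₁ * (Cω * (a * ω (dist x y))) := mul_nonneg hC₁0 hCaω
        have k4 : 0 ≤ C₁ * b := mul_nonneg hC₁0 hb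
        nlinarith [tri, h1, h2, h3, e1, e2, e3, k3, k4, hCaω, hb]
    -- now the full case analysis
    intro x y hxy
    have hδpos : 0 < dist x y := dist_pos.2 hxy
    have hωδ : 0 < ω (dist x y) := hω.1 _ hδpos
    have hCaω : 0 ≤ Cω * (a * ω (dist x y)) :=
      mul_nonneg hCω0.le (mul_nonneg ha hωδ.le)
    have haω : 0 ≤ a * ω (dist x y) := mul_nonneg ha hωδ.le
    have k3 : 0 ≤ C₁ * (Cω * (a * ω (dist x y))) := mul_nonneg hC₁0 hCaω
    have k4 : 0 ≤ C₁ * b := mul_nonneg hC₁0 hb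
    have kCω : 0 ≤ (Cω - 1) * (a * ω (dist x y)) :=
      mul_nonneg (sub_nonneg.2 hCω1) haω
    by_cases hx : x ∈ D <;> by_cases hy : y ∈ D
    · rw [hFfb x hx, hFfb y hy]
      have := hP x hx y hy (dist x y) hδpos le_rfl
      nlinarith [this, kCω, k3, k4, hCaω, hb]
    · rw [hFfb x hx, hFavg y hy]
      have h := SUB_UD y x hy hx
      rw [← norm_neg (fb x - avg y), neg_sub]
      rw [dist_comm y x] at h
      nlinarith [h, kCω, k3, k4, hCaω, hb]
    · rw [hFavg x hx, hFfb y hy]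
      have h := SUB_UD x y hx hy
      nlinarith [h, kCω, k3, k4, hCaω, hb]
    · rw [hFavg x hx, hFavg y hy]
      rcases le_total (d y) (d x) with hc | hc
      · exact SUB_UU x y hx hy hxy hc
      · have h := SUB_UU y x hy hx (Ne.symm hxy) hc
        rw [← norm_neg (avg x - avg y), neg_sub]
        rw [dist_comm y x] at h
        exact h
  -- conclusion
  refine ⟨F, (129 + 24 * C₁) * Cω * M, ?_, ?_, hFfb⟩
  · intro x y hxy
    have h := PAIR M 0 hM le_rfl hQbasic x y hxy
    calc ‖F x - F y‖ ≤ (129 + 24 * C₁) * Cω * (M * ω (dist x y)) + (3 + C₁) * 0 := h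
      _ = (129 + 24 * C₁) * Cω * M * ω (dist x y) := by ring
  · intro ε hε
    have hdenpos : (0:ℝ) < 2 * ((129 + 24 * C₁) * Cω) := by
      have : (0:ℝ) < 129 + 24 * C₁ := by linarith
      positivity
    set ε₂ := ε / (2 * ((129 + 24 * C₁) * Cω)) with hε₂def
    have hε₂pos : 0 < ε₂ := div_pos hε hdenpos
    obtain ⟨Kf, hKf⟩ := hvan ε₂ hε₂pos
    set Kf' := max Kf 1 with hKf'def
    have hKf'1 : (1:ℝ) ≤ Kf' := le_max_right _ _
    have hKf'pos : (0:ℝ) < Kf' := lt_of_lt_of_le one_pos hKf'1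
    have hωKf' : 0 < ω Kf' := hω.1 _ hKf'pos
    set b := M * ω Kf' with hbdef
    have hb0 : 0 ≤ b := mul_nonneg hM hωKf'.le
    have hQref : ∀ p ∈ D, ∀ q ∈ D, ∀ R : ℝ, 0 < R → dist p q ≤ R →
        ‖fb p - fb q‖ ≤ ε₂ * ω R + b := by
      intro p hp q hq R hR hle
      have hεR : 0 ≤ ε₂ * ω R := mul_nonneg hε₂pos.le (hω.1 R hR).le
      rcases eq_or_ne p q with rfl | hne
      · simp only [sub_self, norm_zero]
        linarith
      · rcases le_or_gt Kf' (dist p q) with hcase | hcase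
        · have h1 := hKf p hp q hq hne ((le_max_left _ _).trans hcase)
          have h2 : ω (dist p q) ≤ ω R := hω.2.1 _ _ (dist_pos.2 hne) hle
          have h3 : ε₂ * ω (dist p q) ≤ ε₂ * ω R := mul_le_mul_of_nonneg_left h2 hε₂pos.le
          linarith
        · have h1 : ‖fb p - fb q‖ ≤ M * ω (dist p q) := hfb p hp q hq hne
          have h2 : ω (dist p q) ≤ ω Kf' := hω.2.1 _ _ (dist_pos.2 hne) hcase.le
          have h3 : M * ω (dist p q) ≤ b := by
            rw [hbdef]; exact mul_le_mul_of_nonneg_left h2 hM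
          linarith
    set L := (2 * (3 + C₁) * (b + 1)) / ε with hLdef
    obtain ⟨K₀, hK₀⟩ := eventually_atTop.1 (hcoer.eventually_ge_atTop L)
    refine ⟨max (max K₀ Kf') 1, ?_⟩
    intro x y hxy hKxy
    have hδ1 : (1:ℝ) ≤ dist x y := le_trans (le_max_right _ _) hKxy
    have hδpos : (0:ℝ) < dist x y := by linarith
    have hωδ : 0 < ω (dist x y) := hω.1 _ hδpos
    have hωδL : L ≤ ω (dist x y) :=
      hK₀ _ (le_trans (le_trans (le_max_left _ _) (le_max_left _ _)) hKxy)
    have hmain := PAIR ε₂ b hε₂pos.le hb0 hQref x y hxy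
    have heq1 : (129 + 24 * C₁) * Cω * (ε₂ * ω (dist x y)) = (ε/2) * ω (dist x y) := by
      rw [hε₂def]
      field_simp
    have heq2 : (3 + C₁) * b ≤ (ε/2) * ω (dist x y) := by
      have h1 : (ε/2) * L ≤ (ε/2) * ω (dist x y) :=
        mul_le_mul_of_nonneg_left hωδL (by linarith)
      have h2 : (ε/2) * L = (3 + C₁) * (b + 1) := by
        rw [hLdef]; field_simp
      nlinarith [hC₁0, hb0]
    calc ‖F x - F y‖ ≤ (129 + 24 * C₁) * Cω * (ε₂ * ω (dist x y)) + (3 + C₁) * b := hmain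
      _ ≤ (ε/2) * ω (dist x y) + (ε/2) * ω (dist x y) := by rw [heq1]; linarith
      _ = ε * ω (dist x y) := by ring

end
end AuxHolderExt

/-- for `ω(t) → ∞` as `t → ∞`, `E ⊆ ℝⁿ` arbitrary nonempty and `V` Banach,
`f ∈ C^{0,ω}(E,V)` admits an extension `F ∈ VC_large^{0,ω}(ℝⁿ,V)` iff
`f ∈ VC_large^{0,ω}(E,V)`. -/
theorem holder_extension_vanish_large {n : ℕ} {V : Type*} [NormedAddCommGroup V]
    [NormedSpace ℝ V] [CompleteSpace V] (ω : ℝ → ℝ) (Cω : ℝ) (hCω : 0 < Cω)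
    (hω : IsModulus ω Cω)
    (hcoer : Filter.Tendsto ω Filter.atTop Filter.atTop)
    (E : Set (Rn n)) (hE : E.Nonempty) (f : Rn n → V) (hf : MemHolderOn ω f E) :
    (∃ F : Rn n → V, MemHolderOn ω F Set.univ ∧ VanishLargeOn ω F Set.univ ∧
        ∀ x ∈ E, F x = f x) ↔
      VanishLargeOn ω f E := by
  constructor
  · rintro ⟨F, hFH, hFvan, hFE⟩ ε hε
    obtain ⟨K, hK⟩ := hFvan ε hε
    exact ⟨K, fun x hx y hy hxy hKxy => by
      rw [← hFE x hx, ← hFE y hy]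
      exact hK x (Set.mem_univ x) y (Set.mem_univ y) hxy hKxy⟩
  · intro hvanf
    rcases Nat.eq_zero_or_pos n with hn0 | hn
    · subst hn0
      haveI : Subsingleton (Rn 0) := ⟨fun a b => by ext i; exact i.elim0⟩
      refine ⟨f, ⟨0, ?_⟩, fun ε hε => ⟨0, fun x _ y _ hxy _ =>
        absurd (Subsingleton.elim x y) hxy⟩, fun x _ => rfl⟩
      rintro r ⟨x, -, y, -, hxy, rfl⟩
      exact absurd (Subsingleton.elim x y) hxy
    · obtain ⟨M₀, hM₀⟩ := hf
      set M := max M₀ 0 with hMdef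
      have hM : 0 ≤ M := le_max_right _ _
      have hMM : ∀ x ∈ E, ∀ y ∈ E, x ≠ y → ‖f x - f y‖ ≤ M * ω (dist x y) := by
        intro x hx y hy hxy
        have hmem : ‖f x - f y‖ / ω ‖x - y‖ ∈ ratioSet ω f E := ⟨x, hx, y, hy, hxy, rfl⟩
        have h1 := hM₀ hmem
        have hωpos : 0 < ω ‖x - y‖ := hω.1 _ (by
          rw [norm_sub_pos_iff]
          exact hxy)
        rw [div_le_iff₀ hωpos] at h1
        rw [dist_eq_norm]
        calc ‖f x - f y‖ ≤ M₀ * ω ‖x - y‖ := h1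
          _ ≤ M * ω ‖x - y‖ := mul_le_mul_of_nonneg_right (le_max_left _ _) hωpos.le
      obtain ⟨fb, hfbE, hfbH, htd⟩ := exists_closure_extension hω hM hMM
      have hCω1 : 1 ≤ Cω := hω.one_le
      have hM' : 0 ≤ 2 * Cω * M := by nlinarith
      have hvanbar : ∀ ε : ℝ, 0 < ε → ∃ K, ∀ x ∈ closure E, ∀ y ∈ closure E, x ≠ y →
          K ≤ dist x y → ‖fb x - fb y‖ ≤ ε * ω (dist x y) := by
        intro ε hε
        have hε4 : 0 < ε / (4 * Cω) := by positivity
        obtain ⟨Kf, hKf⟩ := hvanf (ε / (4 * Cω)) hε4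
        refine ⟨max (2 * Kf) 2, ?_⟩
        intro x hx y hy hxy hKxy
        set t := dist x y with htdef
        have ht2 : (2:ℝ) ≤ t := le_trans (le_max_right _ _) hKxy
        have htpos : (0:ℝ) < t := by linarith
        have hωt : 0 < ω t := hω.1 _ htpos
        refine le_of_forall_pos_le_add ?_
        intro ε' hε'
        obtain ⟨δ1, hδ1, h1⟩ := Metric.tendsto_nhdsWithin_nhds.1 (htd x hx) (ε'/2) (by linarith)
        obtain ⟨δ2, hδ2, h2⟩ := Metric.tendsto_nhdsWithin_nhds.1 (htd y hy) (ε'/2) (by linarith)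
        obtain ⟨a, haE, hax⟩ := Metric.mem_closure_iff.1 hx (min δ1 (t/4)) (by positivity)
        obtain ⟨b, hbE, hby⟩ := Metric.mem_closure_iff.1 hy (min δ2 (t/4)) (by positivity)
        have hfa : dist (f a) (fb x) < ε'/2 :=
          h1 haE (by rw [dist_comm]; exact hax.trans_le (min_le_left _ _))
        have hfb' : dist (f b) (fb y) < ε'/2 :=
          h2 hbE (by rw [dist_comm]; exact hby.trans_le (min_le_left _ _))
        have hax4 : dist x a ≤ t/4 := (hax.trans_le (min_le_right _ _)).le
        have hby4 : dist y b ≤ t/4 := (hby.trans_le (min_le_right _ _)).le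
        have habl : t/2 ≤ dist a b := by
          have h' := dist_triangle4 x a b y
          rw [dist_comm b y] at h'
          linarith
        have habu : dist a b ≤ 2*t := by
          have h' := dist_triangle4 a x y b
          rw [dist_comm a x] at h'
          linarith
        have hne : a ≠ b := by
          intro h
          rw [h, dist_self] at habl
          linarith
        have hKfab : Kf ≤ ‖a - b‖ := by
          rw [← dist_eq_norm]
          have h2Kf : 2 * Kf ≤ t := le_trans (le_max_left _ _) hKxy
          linarith
        have hfab := hKf a haE b hbE hne hKfab
        have hωab : ω (dist a b) ≤ 2 * Cω * ω t := by
          have hmono : ω (dist a b) ≤ ω (2*t) := hω.2.1 _ _ (by linarith) habu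
          have := hω.scale (a := 2) one_le_two htpos
          linarith
        have hfabt : ‖f a - f b‖ ≤ (ε/2) * ω t := by
          calc ‖f a - f b‖ ≤ ε/(4*Cω) * ω ‖a - b‖ := hfab
            _ = ε/(4*Cω) * ω (dist a b) := by rw [dist_eq_norm]
            _ ≤ ε/(4*Cω) * (2*Cω*ω t) := mul_le_mul_of_nonneg_left hωab (by positivity)
            _ = (ε/2) * ω t := by field_simp; ring
        have tri : ‖fb x - fb y‖ ≤ dist (fb x) (f a) + ‖f a - f b‖ + dist (f b) (fb y) := by
          have h := dist_triangle4 (fb x) (f a) (f b) (fb y)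
          rw [dist_eq_norm (fb x) (fb y), dist_eq_norm (f a) (f b)] at h
          exact h
        rw [dist_comm (fb x) (f a)] at tri
        have hεε : (ε/2) * ω t ≤ ε * ω t := by nlinarith
        linarith
      obtain ⟨F, M₂, hFH, hFvan, hFD⟩ := exists_extension hn hω hcoer hE hM' hfbH hvanbar
      refine ⟨F, ?_, ?_, fun x hx => by rw [hFD x (subset_closure hx), hfbE x hx]⟩
      · refine ⟨max M₂ 0, ?_⟩
        rintro r ⟨x, -, y, -, hxy, rfl⟩
        have hωpos : 0 < ω ‖x - y‖ := hω.1 _ (by rw [norm_sub_pos_iff]; exact hxy)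
        rw [div_le_iff₀ hωpos]
        have h := hFH x y hxy
        rw [dist_eq_norm] at h
        calc ‖F x - F y‖ ≤ M₂ * ω ‖x - y‖ := h
          _ ≤ max M₂ 0 * ω ‖x - y‖ := mul_le_mul_of_nonneg_right (le_max_left _ _) hωpos.le
      · intro ε hε
        obtain ⟨K, hK⟩ := hFvan ε hε
        refine ⟨K, fun x _ y _ hxy hKxy => ?_⟩
        have h := hK x y hxy (by rw [dist_eq_norm]; exact hKxy)
        rw [dist_eq_norm] at h
        exact h
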